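/- arXiv:2104.15021 — 2 statements merged into one kernel-verified Lean document; each statement's English description precedes it below -/
import Mathlib

section
/- If F is a face of a polyhedron P, then any face of F is a face of P. -/
open Matrix Set
open scoped Classical

/-- A polyhedron in `ℝⁿ`: the solution set of a finite system of linear
inequalities `A x ≥ b`. -/
def IsPolyhedron {n : ℕ} (P : Set (Fin n → ℝ)) : Prop :=
  ∃ (m : ℕ) (A : Fin m → Fin n → ℝ) (b : Fin m → ℝ),
    P = {x | ∀ i, A i ⬝ᵥ x ≥ b i}

/-- A face of `P`: the empty set or the set of minimizers of a linear
functional over `P`. -/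
def IsFace {n : ℕ} (P F : Set (Fin n → ℝ)) : Prop :=
  F = ∅ ∨ ∃ c : Fin n → ℝ, F = {x ∈ P | ∀ y ∈ P, c ⬝ᵥ x ≤ c ⬝ᵥ y}

/-- Dimension of a polyhedron: dimension of the direction of its affine
hull, with the convention `pdim ∅ = -1`. -/
noncomputable def pdim {n : ℕ} (P : Set (Fin n → ℝ)) : ℤ :=
  if P = ∅ then -1 else (Module.finrank ℝ (vectorSpan ℝ P) : ℤ)

/-!
Write `P = {x | A x ≥ b}`. A nonempty face `H` of `P` is cut out of `P` by the constraints that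
are tight on all of `H`: some `z ∈ H` satisfies every other constraint strictly (midpoints of
witnesses, by concavity), so for any `x ∈ P` tight wherever `H` is, `z + t • (z - x) ∈ P` for small
`t > 0`, and minimality of `z` forces `x` to be a minimizer as well. Conversely the points of `P`
where a set `S` of constraints is tight minimize `∑ i ∈ S, A i` over `P`. Since `F` is again a
polyhedron (add the reversed tight constraints), `G` is cut out of `F`, hence of `P`, by tight
constraints, and is therefore a face of `P`.
-/

open Filter Topology

theorem exists_mem_forall_lt_of_concaveOn {E ι : Type*} [AddCommGroup E] [Module ℝ E]
    {H : Set E} (hne : H.Nonempty) {f : ι → E → ℝ} {b : ι → ℝ} (s : Finset ι)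
    (hf : ∀ i ∈ s, ConcaveOn ℝ H (f i)) (hb : ∀ i ∈ s, ∀ x ∈ H, b i ≤ f i x) :
    ∃ z ∈ H, ∀ i ∈ s, (∃ w ∈ H, b i < f i w) → b i < f i z := by
  induction s using Finset.induction_on with
  | empty =>
    obtain ⟨z, hz⟩ := hne
    exact ⟨z, hz, by simp⟩
  | insert j s _ ih =>
    obtain ⟨z, hzH, hz⟩ := ih (fun i hi => hf i (Finset.mem_insert_of_mem hi))
      (fun i hi => hb i (Finset.mem_insert_of_mem hi))
    by_cases hjw : ∃ w ∈ H, b j < f j w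
    · obtain ⟨w, hwH, hw⟩ := hjw
      refine ⟨(1 / 2 : ℝ) • z + (1 / 2 : ℝ) • w,
        (hf j (Finset.mem_insert_self j s)).1 hzH hwH (by norm_num) (by norm_num) (by norm_num),
        fun i hi hiw => ?_⟩
      have hmid := (hf i hi).2 hzH hwH (by norm_num : (0 : ℝ) ≤ 1 / 2)
        (by norm_num : (0 : ℝ) ≤ 1 / 2) (by norm_num)
      simp only [smul_eq_mul] at hmid
      have hbz := hb i hi z hzH
      have hbw := hb i hi w hwH
      rcases Finset.mem_insert.1 hi with rfl | his
      · linarith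
      · linarith [hz i his hiw]
    · refine ⟨z, hzH, fun i hi hiw => ?_⟩
      rcases Finset.mem_insert.1 hi with rfl | his
      · exact absurd hiw hjw
      · exact hz i his hiw

variable {n : ℕ} {ι : Type*}

def polyhedron (A : ι → Fin n → ℝ) (b : ι → ℝ) : Set (Fin n → ℝ) :=
  {x | ∀ i, A i ⬝ᵥ x ≥ b i}

def tightIndices (A : ι → Fin n → ℝ) (b : ι → ℝ) (H : Set (Fin n → ℝ)) : Set ι :=
  {i | ∀ z ∈ H, A i ⬝ᵥ z = b i}

def tightFace (A : ι → Fin n → ℝ) (b : ι → ℝ) (S : Set ι) : Set (Fin n → ℝ) :=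
  {x ∈ polyhedron A b | ∀ i ∈ S, A i ⬝ᵥ x = b i}

theorem IsFace.subset {P F : Set (Fin n → ℝ)} (h : IsFace P F) : F ⊆ P := by
  rcases h with rfl | ⟨c, rfl⟩
  · exact empty_subset P
  · exact sep_subset P _

theorem IsFace.convex {P F : Set (Fin n → ℝ)} (hP : Convex ℝ P) (hF : IsFace P F) :
    Convex ℝ F := by
  rcases hF with rfl | ⟨c, rfl⟩
  · exact convex_empty
  rintro x ⟨hxP, hx⟩ y ⟨hyP, hy⟩ s t hs ht hst
  refine ⟨hP hxP hyP hs ht hst, fun w hw => ?_⟩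
  rw [dotProduct_add, dotProduct_smul, dotProduct_smul, smul_eq_mul, smul_eq_mul]
  calc s * c ⬝ᵥ x + t * c ⬝ᵥ y ≤ s * c ⬝ᵥ w + t * c ⬝ᵥ w :=
        add_le_add (mul_le_mul_of_nonneg_left (hx w hw) hs) (mul_le_mul_of_nonneg_left (hy w hw) ht)
    _ = c ⬝ᵥ w := by rw [← add_mul, hst, one_mul]

theorem convex_polyhedron (A : ι → Fin n → ℝ) (b : ι → ℝ) : Convex ℝ (polyhedron A b) := by
  simp only [polyhedron, ge_iff_le, ofPred_forall]
  exact convex_iInter fun i => convex_halfSpace_ge (dotProductBilin ℝ ℝ (A i)).isLinear (b i)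

theorem exists_mem_forall_lt_of_notMem_tightIndices [Finite ι] {A : ι → Fin n → ℝ} {b : ι → ℝ}
    {H : Set (Fin n → ℝ)} (hne : H.Nonempty) (hconv : Convex ℝ H) (hH : H ⊆ polyhedron A b) :
    ∃ z ∈ H, ∀ i ∉ tightIndices A b H, b i < A i ⬝ᵥ z := by
  have := Fintype.ofFinite ι
  obtain ⟨z, hzH, hz⟩ := exists_mem_forall_lt_of_concaveOn hne Finset.univ
    (fun i _ => (dotProductBilin ℝ ℝ (A i)).concaveOn hconv) (fun i _ x hx => hH hx i)
  refine ⟨z, hzH, fun i hi => hz i (Finset.mem_univ i) ?_⟩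
  obtain ⟨w, hwH, hw⟩ := not_forall₂.1 hi
  exact ⟨w, hwH, lt_of_le_of_ne (hH hwH i) (Ne.symm hw)⟩

theorem IsFace.eq_tightFace [Finite ι] {A : ι → Fin n → ℝ} {b : ι → ℝ} {H : Set (Fin n → ℝ)}
    (hH : IsFace (polyhedron A b) H) (hne : H.Nonempty) :
    H = tightFace A b (tightIndices A b H) := by
  refine Subset.antisymm (fun x hx => ⟨hH.subset hx, fun i hi => hi x hx⟩) ?_
  obtain ⟨z, hzH, hz⟩ := exists_mem_forall_lt_of_notMem_tightIndices hne
    (hH.convex (convex_polyhedron A b)) hH.subset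
  obtain ⟨d, hd⟩ := hH.resolve_left hne.ne_empty
  have hzmin : ∀ y ∈ polyhedron A b, d ⬝ᵥ z ≤ d ⬝ᵥ y := (hd ▸ hzH).2
  rintro x ⟨hxQ, hx⟩
  -- `z` satisfies strictly every constraint not tight on `H`, so the ray from `z` away from `x`
  -- starts inside the polyhedron; minimality of `z` along it gives `d ⬝ᵥ x ≤ d ⬝ᵥ z`.
  have hnear : ∀ᶠ t in 𝓝 (0 : ℝ), z + t • (z - x) ∈ polyhedron A b := by
    refine eventually_all.2 fun i => ?_
    simp only [dotProduct_add, dotProduct_smul, dotProduct_sub, smul_eq_mul]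
    by_cases hi : i ∈ tightIndices A b H
    · exact Eventually.of_forall fun t => by simp [hi z hzH, hx i hi]
    · refine (Tendsto.eventually_const_lt (hz i hi) ?_).mono fun t ht => ht.le
      exact Continuous.tendsto' (by fun_prop) 0 _ (by simp)
  obtain ⟨t, hyQ, ht⟩ := ((hnear.filter_mono nhdsWithin_le_nhds).and
    (self_mem_nhdsWithin (s := Ioi 0))).exists
  have hdy := hzmin _ hyQ
  rw [dotProduct_add, dotProduct_smul, dotProduct_sub, smul_eq_mul] at hdy
  have hdx : d ⬝ᵥ x ≤ d ⬝ᵥ z := by nlinarith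
  rw [hd]
  exact ⟨hxQ, fun y hy => hdx.trans (hzmin y hy)⟩

theorem isFace_tightFace [Fintype ι] (A : ι → Fin n → ℝ) (b : ι → ℝ) (S : Set ι) :
    IsFace (polyhedron A b) (tightFace A b S) := by
  rcases (tightFace A b S).eq_empty_or_nonempty with hempty | ⟨x₀, hx₀⟩
  · exact Or.inl hempty
  refine Or.inr ⟨∑ i ∈ S.toFinset, A i, ?_⟩
  have hsum_le : ∀ x ∈ polyhedron A b, ∑ i ∈ S.toFinset, b i ≤ ∑ i ∈ S.toFinset, A i ⬝ᵥ x :=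
    fun x hx => Finset.sum_le_sum fun i _ => hx i
  have hsum_eq : ∀ x ∈ tightFace A b S, ∑ i ∈ S.toFinset, A i ⬝ᵥ x = ∑ i ∈ S.toFinset, b i :=
    fun x hx => Finset.sum_congr rfl fun i hi => hx.2 i (mem_toFinset.1 hi)
  ext x
  simp only [sum_dotProduct, mem_sep_iff]
  constructor
  · intro hx
    exact ⟨hx.1, fun y hy => (hsum_eq x hx).trans_le (hsum_le y hy)⟩
  · rintro ⟨hxQ, hxmin⟩
    have hx := le_antisymm ((hxmin x₀ hx₀.1).trans (hsum_eq x₀ hx₀).le) (hsum_le x hxQ)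
    exact ⟨hxQ, fun i hi =>
      ((Finset.sum_eq_sum_iff_of_le fun i _ => hxQ i).1 hx.symm i (mem_toFinset.2 hi)).symm⟩

theorem tightFace_sumElim (A : ι → Fin n → ℝ) (b : ι → ℝ) (S : Set ι) (T : Set (ι ⊕ S)) :
    tightFace (Sum.elim A fun i : S => -A i) (Sum.elim b fun i : S => -b i) T =
      tightFace A b (S ∪ Sum.inl ⁻¹' T) := by
  ext x
  simp only [tightFace, polyhedron, mem_ofPred_eq, Sum.forall, Sum.elim_inl,
    Sum.elim_inr, neg_dotProduct, ge_iff_le, neg_le_neg_iff, neg_inj, mem_union, mem_preimage]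
  constructor
  · rintro ⟨⟨hA, hS⟩, hTl, -⟩
    exact ⟨hA, fun i hi => hi.elim (fun hiS => le_antisymm (hS ⟨i, hiS⟩) (hA i)) (hTl i)⟩
  · rintro ⟨hA, hST⟩
    exact ⟨⟨hA, fun i => (hST i (Or.inl i.2)).le⟩, fun i hi => hST i (Or.inr hi),
      fun i _ => hST i (Or.inl i.2)⟩

theorem polyhedron_sumElim (A : ι → Fin n → ℝ) (b : ι → ℝ) (S : Set ι) :
    polyhedron (Sum.elim A fun i : S => -A i) (Sum.elim b fun i : S => -b i) = tightFace A b S := by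
  simpa [tightFace] using tightFace_sumElim A b S ∅

theorem face_of_face {n : ℕ} (P F G : Set (Fin n → ℝ)) (hP : IsPolyhedron P)
    (hF : IsFace P F) (hG : IsFace F G) : IsFace P G := by
  obtain ⟨m, A, b, rfl⟩ := hP
  rcases G.eq_empty_or_nonempty with hempty | hGne
  · exact Or.inl hempty
  change IsFace (polyhedron A b) F at hF
  change IsFace (polyhedron A b) G
  rw [hF.eq_tightFace (hGne.mono hG.subset), ← polyhedron_sumElim] at hG
  rw [hG.eq_tightFace hGne, tightFace_sumElim]
  exact isFace_tightFace A b _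
end

section
/- Every proper nonempty face of a nonempty polyhedron P is an intersection of facets of P; hence the face lattice of P is coatomistic. -/
/-!
Write `P = {x | bᵢ ≤ aᵢ x, i ∈ S}` with `S` irredundant. A nonempty face `F`, the set of
minimizers of `c` on `P`, consists of the points of `P` on which every constraint that is tight
on all of `F` is tight: a point `x₀` of `F` strictly satisfying all other constraints stays in `P`
when moved a little away from such an `x`, which forces `c x ≤ c x₀`. Constraints tight on all of
`P` are tight on `x` anyway, so `F = ⋂ Fᵢ` with `Fᵢ = {x ∈ P | aᵢ x = bᵢ}` over the remaining
constraints `i` tight on `F`; there is at least one of them since `F ≠ P`.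

Each such `Fᵢ` is a facet. Irredundancy gives a point violating constraint `i` only, and the
segment from a relative interior point of `P` to it meets `Fᵢ` in a point strictly satisfying
every constraint that is not tight on all of `P`. Around that point `Fᵢ` fills the affine hull of
`P` cut by the hyperplane `aᵢ = bᵢ`, so its dimension drops by exactly one.
-/

open Matrix Set
open scoped Classical

/-- A facet of `P` is a face of dimension `dim P - 1`. -/
noncomputable def IsFacet {n : ℕ} (P F : Set (Fin n → ℝ)) : Prop :=
  IsFace P F ∧ pdim F = pdim P - 1

open Filter Topology Module Finset

theorem vectorSpan_le_ker_of_forall_eq {k V M : Type*} [Ring k] [AddCommGroup V] [Module k V]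
    [AddCommGroup M] [Module k M] {s : Set V} {f : V →ₗ[k] M} {r : M}
    (h : ∀ x ∈ s, f x = r) : vectorSpan k s ≤ LinearMap.ker f := by
  rw [vectorSpan_def, Submodule.span_le]
  rintro _ ⟨x, hx, y, hy, rfl⟩
  simp [h x hx, h y hy]

theorem Submodule.finrank_inf_ker_add_one {K V : Type*} [DivisionRing K] [AddCommGroup V]
    [Module K V] [FiniteDimensional K V] {W : Submodule K V} {f : Module.Dual K V} {w : V}
    (hw : w ∈ W) (hfw : f w ≠ 0) : finrank K ↥(W ⊓ LinearMap.ker f) + 1 = finrank K W := by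
  have hne : f.domRestrict W ≠ 0 := fun h => hfw (by simpa using LinearMap.congr_fun h ⟨w, hw⟩)
  rw [← Submodule.map_comap_subtype, Submodule.finrank_map_subtype_eq,
    ← LinearMap.ker_domRestrict]
  exact Module.Dual.finrank_ker_add_one_of_ne_zero hne

section Constraints

variable {V ι : Type*} [AddCommGroup V] [Module ℝ V]

def minimizers (c : V →ₗ[ℝ] ℝ) (P : Set V) : Set V := {x ∈ P | ∀ y ∈ P, c x ≤ c y}

theorem convex_minimizers {P : Set V} (hP : Convex ℝ P) (c : V →ₗ[ℝ] ℝ) :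
    Convex ℝ (minimizers c P) := by
  rintro x ⟨hxP, hx⟩ y ⟨hyP, hy⟩ s t hs ht hst
  refine ⟨hP hxP hyP hs ht hst, fun z hz => ?_⟩
  obtain rfl : t = 1 - s := by linarith
  simp only [map_add, map_smul, smul_eq_mul]
  nlinarith [mul_le_mul_of_nonneg_left (hx z hz) hs, mul_le_mul_of_nonneg_left (hy z hz) ht]

variable (a : ι → V →ₗ[ℝ] ℝ) (b : ι → ℝ)

def solSet (S : Finset ι) : Set V := {x | ∀ i ∈ S, b i ≤ a i x}

def constraintFace (S : Finset ι) (i : ι) : Set V := {x ∈ solSet a b S | a i x = b i}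

def activeIndices (S : Finset ι) (F : Set V) : Set ι :=
  {i | i ∈ S ∧ (∀ z ∈ F, a i z = b i) ∧ ∃ y ∈ solSet a b S, b i < a i y}

variable {a b}

theorem convex_solSet (S : Finset ι) : Convex ℝ (solSet a b S) := by
  intro x hx y hy s t hs ht hst i hi
  obtain rfl : t = 1 - s := by linarith
  simp only [map_add, map_smul, smul_eq_mul]
  nlinarith [mul_le_mul_of_nonneg_left (hx i hi) hs, mul_le_mul_of_nonneg_left (hy i hi) ht]

theorem apply_eq_of_not_exists_lt {S : Finset ι} {i : ι} (hi : i ∈ S)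
    (h : ¬∃ y ∈ solSet a b S, b i < a i y) {x : V} (hx : x ∈ solSet a b S) : a i x = b i :=
  le_antisymm (not_lt.1 fun hlt => h ⟨x, hx, hlt⟩) (hx i hi)

theorem exists_lt_of_solSet_erase_ne [DecidableEq ι] {S : Finset ι} {i : ι}
    (h : solSet a b (S.erase i) ≠ solSet a b S) : ∃ y ∈ solSet a b (S.erase i), a i y < b i := by
  by_contra! h'
  refine h (Set.Subset.antisymm (fun y hy j hj => ?_) fun x hx j hj => hx j (mem_of_mem_erase hj))
  rcases eq_or_ne j i with rfl | hji
  · exact h' y hy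
  · exact hy j (mem_erase.2 ⟨hji, hj⟩)

theorem constraintFace_eq_minimizers {S : Finset ι} {i : ι} (hi : i ∈ S)
    (hne : (constraintFace a b S i).Nonempty) :
    constraintFace a b S i = minimizers (a i) (solSet a b S) := by
  obtain ⟨w, hwP, hwi⟩ := hne
  ext x
  exact ⟨fun ⟨hx, hxi⟩ => ⟨hx, fun y hy => hxi ▸ hy i hi⟩,
    fun ⟨hx, hmin⟩ => ⟨hx, le_antisymm ((hmin w hwP).trans_eq hwi) (hx i hi)⟩⟩

theorem Convex.exists_forall_lt_of_exists_lt {Q : Set V} (hQ : Convex ℝ Q) (hne : Q.Nonempty)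
    (T : Finset ι) (hle : ∀ x ∈ Q, ∀ j ∈ T, b j ≤ a j x) (hlt : ∀ j ∈ T, ∃ y ∈ Q, b j < a j y) :
    ∃ x ∈ Q, ∀ j ∈ T, b j < a j x := by
  induction T using Finset.induction_on with
  | empty => exact hne.imp fun x hx => ⟨hx, by simp⟩
  | @insert j T hj ih =>
    obtain ⟨x, hxQ, hx⟩ := ih (fun x hx k hk => hle x hx k (mem_insert_of_mem hk))
      (fun k hk => hlt k (mem_insert_of_mem hk))
    obtain ⟨y, hyQ, hy⟩ := hlt j (mem_insert_self j T)
    refine ⟨(1 / 2 : ℝ) • x + (1 / 2 : ℝ) • y,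
      hQ hxQ hyQ (by norm_num) (by norm_num) (by norm_num), fun k hk => ?_⟩
    have hxk := hle x hxQ k hk
    have hyk := hle y hyQ k hk
    simp only [map_add, map_smul, smul_eq_mul]
    rcases Finset.mem_insert.1 hk with rfl | hk
    · linarith
    · linarith [hx k hk]

theorem exists_pos_forall_lt_add_smul (T : Finset ι) {x : V} (hx : ∀ j ∈ T, b j < a j x) (v : V) :
    ∃ t > (0 : ℝ), ∀ j ∈ T, b j < a j (x + t • v) := by
  have : ∀ᶠ t in 𝓝[>] (0 : ℝ), ∀ j ∈ T, b j < a j (x + t • v) := by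
    refine (eventually_all_finset T).2 fun j hj => ?_
    simp only [map_add, map_smul, smul_eq_mul]
    have hcont : Continuous fun t : ℝ => a j x + t * a j v := by fun_prop
    exact ((hcont.tendsto' 0 _ (by simp)).mono_left nhdsWithin_le_nhds).eventually
      (lt_mem_nhds (hx j hj))
  exact (this.and self_mem_nhdsWithin).exists.imp fun t h => ⟨h.2, h.1⟩

theorem mem_minimizers_of_tight {S : Finset ι} {c : V →ₗ[ℝ] ℝ}
    (hne : (minimizers c (solSet a b S)).Nonempty) {x : V} (hx : x ∈ solSet a b S)
    (htight : ∀ i ∈ activeIndices a b S (minimizers c (solSet a b S)), a i x = b i) :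
    x ∈ minimizers c (solSet a b S) := by
  set P := solSet a b S
  set F := minimizers c P
  obtain ⟨x₀, hx₀F, hx₀⟩ :=
    (convex_minimizers (convex_solSet S) c).exists_forall_lt_of_exists_lt hne
      (S.filter fun j => ∃ z ∈ F, b j < a j z)
      (fun z hz j hj => hz.1 j (mem_filter.1 hj).1) (fun j hj => (mem_filter.1 hj).2)
  obtain ⟨t, ht, hzt⟩ := exists_pos_forall_lt_add_smul _ hx₀ (x₀ - x)
  have hzP : x₀ + t • (x₀ - x) ∈ P := by
    intro j hj
    by_cases hjF : ∃ z ∈ F, b j < a j z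
    · exact (hzt j (mem_filter.2 ⟨hj, hjF⟩)).le
    have hx₀j : a j x₀ = b j := le_antisymm (not_lt.1 fun h => hjF ⟨x₀, hx₀F, h⟩) (hx₀F.1 j hj)
    have hxj : a j x = b j := by
      by_cases hjP : ∃ y ∈ P, b j < a j y
      · refine htight j ⟨hj, fun z hz => ?_, hjP⟩
        exact le_antisymm (not_lt.1 fun h => hjF ⟨z, hz, h⟩) (hz.1 j hj)
      · exact apply_eq_of_not_exists_lt hj hjP hx
    simp [hx₀j, hxj]
  have hcx : c x ≤ c x₀ := by
    have := hx₀F.2 _ hzP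
    simp only [map_add, map_smul, map_sub, smul_eq_mul] at this
    nlinarith
  exact ⟨hx, fun y hy => hcx.trans (hx₀F.2 y hy)⟩

theorem activeIndices_nonempty {S : Finset ι} {c : V →ₗ[ℝ] ℝ}
    (hne : (minimizers c (solSet a b S)).Nonempty)
    (hproper : minimizers c (solSet a b S) ≠ solSet a b S) :
    (activeIndices a b S (minimizers c (solSet a b S))).Nonempty := by
  by_contra hK
  rw [Set.not_nonempty_iff_eq_empty] at hK
  exact hproper (Set.Subset.antisymm (fun x hx => hx.1)
    fun x hx => mem_minimizers_of_tight hne hx (by simp [hK]))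

theorem minimizers_eq_biInter_constraintFace {S : Finset ι} {c : V →ₗ[ℝ] ℝ}
    (hne : (minimizers c (solSet a b S)).Nonempty)
    (hK : (activeIndices a b S (minimizers c (solSet a b S))).Nonempty) :
    minimizers c (solSet a b S) =
      ⋂ i ∈ activeIndices a b S (minimizers c (solSet a b S)), constraintFace a b S i := by
  refine Set.Subset.antisymm (fun x hx => Set.mem_iInter₂.2 fun i hi =>
    ⟨hx.1, hi.2.1 x hx⟩) fun x hx => ?_
  obtain ⟨i₀, hi₀⟩ := hK
  exact mem_minimizers_of_tight hne (Set.mem_iInter₂.1 hx i₀ hi₀).1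
    fun i hi => (Set.mem_iInter₂.1 hx i hi).2

theorem exists_mem_constraintFace_forall_lt [DecidableEq ι] {S : Finset ι} {i : ι} (hi : i ∈ S)
    (hirr : ∃ y ∈ solSet a b (S.erase i), a i y < b i)
    (hslack : ∃ x ∈ solSet a b S, b i < a i x) :
    ∃ z ∈ constraintFace a b S i,
      ∀ j ∈ S, j ≠ i → (∃ x ∈ solSet a b S, b j < a j x) → b j < a j z := by
  obtain ⟨x, hxP, hx⟩ := (convex_solSet S).exists_forall_lt_of_exists_lt (hslack.imp fun _ h => h.1)
    (S.filter fun j => ∃ x ∈ solSet a b S, b j < a j x)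
    (fun x hx j hj => hx j (mem_filter.1 hj).1) (fun j hj => (mem_filter.1 hj).2)
  obtain ⟨y, hy, hyi⟩ := hirr
  have hxi : b i < a i x := hx i (mem_filter.2 ⟨hi, hslack⟩)
  -- `x + t • (y - x)` is where the segment from `x` to `y` crosses the hyperplane `a i = b i`
  set t := (a i x - b i) / (a i x - a i y)
  have ht0 : 0 < t := div_pos (by linarith) (by linarith)
  have ht1 : t < 1 := (div_lt_one (by linarith)).2 (by linarith)
  have happ : ∀ j, a j (x + t • (y - x)) = (1 - t) * a j x + t * a j y := by
    intro j
    simp only [map_add, map_smul, map_sub, smul_eq_mul]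
    ring
  have hzi : a i (x + t • (y - x)) = b i := by
    have ht : t * (a i x - a i y) = a i x - b i := div_mul_cancel₀ _ (by linarith)
    rw [happ]
    linear_combination -ht
  refine ⟨x + t • (y - x), ⟨fun j hj => ?_, hzi⟩, fun j hj hji hjs => ?_⟩
  · rcases eq_or_ne j i with rfl | hji
    · exact hzi.ge
    · rw [happ]
      nlinarith [hxP j hj, hy j (mem_erase.2 ⟨hji, hj⟩)]
  · rw [happ]
    nlinarith [hx j (mem_filter.2 ⟨hj, hjs⟩), hy j (mem_erase.2 ⟨hji, hj⟩)]

theorem vectorSpan_constraintFace {S : Finset ι} {i : ι} {z : V} (hz : z ∈ constraintFace a b S i)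
    (hzlt : ∀ j ∈ S, j ≠ i → (∃ x ∈ solSet a b S, b j < a j x) → b j < a j z) :
    vectorSpan ℝ (constraintFace a b S i) =
      vectorSpan ℝ (solSet a b S) ⊓ LinearMap.ker (a i) := by
  refine le_antisymm (le_inf (vectorSpan_mono ℝ fun x hx => hx.1)
    (vectorSpan_le_ker_of_forall_eq fun x hx => hx.2)) fun v hv => ?_
  obtain ⟨hvP, hvi⟩ := Submodule.mem_inf.1 hv
  rw [LinearMap.mem_ker] at hvi
  obtain ⟨ε, hε, hεlt⟩ := exists_pos_forall_lt_add_smul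
    ((S.erase i).filter fun j => ∃ x ∈ solSet a b S, b j < a j x)
    (fun j hj => hzlt j (mem_of_mem_erase (mem_filter.1 hj).1)
      (ne_of_mem_erase (mem_filter.1 hj).1) (mem_filter.1 hj).2) v
  have hεi : a i (z + ε • v) = b i := by simp [hvi, hz.2]
  have hmem : z + ε • v ∈ constraintFace a b S i := by
    refine ⟨fun j hj => ?_, hεi⟩
    rcases eq_or_ne j i with rfl | hji
    · exact hεi.ge
    by_cases hjP : ∃ x ∈ solSet a b S, b j < a j x
    · exact (hεlt j (mem_filter.2 ⟨mem_erase.2 ⟨hji, hj⟩, hjP⟩)).le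
    have hvj : a j v = 0 :=
      vectorSpan_le_ker_of_forall_eq (fun x hx => apply_eq_of_not_exists_lt hj hjP hx) hvP
    simpa [hvj] using hz.1 j hj
  have : ε • v ∈ vectorSpan ℝ (constraintFace a b S i) := by
    simpa using vsub_mem_vectorSpan ℝ hmem hz
  exact (Submodule.smul_mem_iff _ hε.ne').1 this

theorem finrank_vectorSpan_constraintFace_add_one [FiniteDimensional ℝ V] [DecidableEq ι]
    {S : Finset ι} {i : ι} (hi : i ∈ S) (hirr : ∃ y ∈ solSet a b (S.erase i), a i y < b i)
    (hslack : ∃ x ∈ solSet a b S, b i < a i x) :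
    finrank ℝ (vectorSpan ℝ (constraintFace a b S i)) + 1 =
      finrank ℝ (vectorSpan ℝ (solSet a b S)) := by
  obtain ⟨z, hz, hzlt⟩ := exists_mem_constraintFace_forall_lt hi hirr hslack
  obtain ⟨x, hxP, hxi⟩ := hslack
  rw [vectorSpan_constraintFace hz hzlt]
  refine Submodule.finrank_inf_ker_add_one (vsub_mem_vectorSpan ℝ hxP hz.1) ?_
  simp only [vsub_eq_sub, map_sub, hz.2]
  linarith

end Constraints

theorem pdim_of_nonempty {n : ℕ} {Q : Set (Fin n → ℝ)} (h : Q.Nonempty) :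
    pdim Q = (finrank ℝ (vectorSpan ℝ Q) : ℤ) :=
  if_neg h.ne_empty

theorem face_coatomistic_general {n : ℕ} (P F : Set (Fin n → ℝ)) (hP : IsPolyhedron P)
    (hF : IsFace P F) (hFne : F.Nonempty) (hFP : F ≠ P) :
    ∃ 𝓕 : Set (Set (Fin n → ℝ)), (∀ G ∈ 𝓕, IsFacet P G) ∧ F = ⋂₀ 𝓕 := by
  obtain ⟨m, A, b, rfl⟩ := hP
  set a : Fin m → (Fin n → ℝ) →ₗ[ℝ] ℝ := fun i => dotProductBilin ℝ ℝ (A i)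
  obtain ⟨S, -, hSmin⟩ := exists_minimal_le_of_wellFoundedLT
    (fun S => solSet a b S = {x | ∀ i, A i ⬝ᵥ x ≥ b i}) univ (by ext; simp [solSet, a])
  have hirr : ∀ i ∈ S, solSet a b (S.erase i) ≠ solSet a b S := fun i hi => by
    rw [hSmin.prop]; exact hSmin.not_prop_of_lt (erase_ssubset hi)
  obtain ⟨c, hc⟩ := hF.resolve_left hFne.ne_empty
  obtain rfl : F = minimizers (dotProductBilin ℝ ℝ c) (solSet a b S) := by
    rw [hc, hSmin.prop]; rfl
  rw [← hSmin.prop] at hFP ⊢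
  have hK := activeIndices_nonempty hFne hFP
  refine ⟨constraintFace a b S '' activeIndices a b S _, ?_, by
    rw [Set.sInter_image]; exact minimizers_eq_biInter_constraintFace hFne hK⟩
  rintro _ ⟨i, hi, rfl⟩
  obtain ⟨hiS, htight, hslack⟩ := hi
  have hGne : (constraintFace a b S i).Nonempty := hFne.mono fun x hx => ⟨hx.1, htight x hx⟩
  refine ⟨Or.inr ⟨A i, constraintFace_eq_minimizers hiS hGne⟩, ?_⟩
  have hdim := finrank_vectorSpan_constraintFace_add_one hiS
    (exists_lt_of_solSet_erase_ne (hirr i hiS)) hslack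
  rw [pdim_of_nonempty hGne, pdim_of_nonempty (hGne.mono fun x hx => hx.1)]
  omega

theorem face_coatomistic {n : ℕ} (P F : Set (Fin n → ℝ)) (hP : IsPolyhedron P)
    (hPne : P.Nonempty) (hF : IsFace P F) (hFne : F.Nonempty) (hFP : F ≠ P) :
    ∃ 𝓕 : Set (Set (Fin n → ℝ)), (∀ G ∈ 𝓕, IsFacet P G) ∧ F = ⋂₀ 𝓕 :=
  face_coatomistic_general P F hP hF hFne hFP
end
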